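/- Let X : Ω → ℝ^d and Z : Ω → ℝ^k be random vectors on a probability space, each with finite second moment. Let Σ_XX = Cov(X,X) ∈ ℝ^{d×d} and Σ_XZ = Cov(X,Z) ∈ ℝ^{d×k}, and assume Im(Σ_XZ) ⊆ Im(Σ_XX). Let R be the symmetric positive semidefinite matrix with R² = Σ_XX, let W be the Moore–Penrose pseudoinverse of R, let N be the Moore–Penrose pseudoinverse of W·Σ_XZ, and define Â := I_d − R·(W·Σ_XZ)·N·W and b̂ := E[X] − Â·E[X]. Then (i) Cov(Â·X + b̂, Z) = 0, and (ii) for every A ∈ ℝ^{d×d} and b ∈ ℝ^d satisfying Cov(A·X + b, Z) = 0, one has E[‖Â·X + b̂ − X‖²] ≤ E[‖A·X + b − X‖²]. (LEACE: Â, b̂ solve the minimal-disturbance affine concept-erasure problem.) -/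

import Mathlib

open MeasureTheory Matrix

/-- The cross-covariance matrix of two random vectors. -/
noncomputable def crossCov {Ω : Type*} [MeasureSpace Ω] {m k : ℕ}
    (X : Ω → Fin m → ℝ) (Z : Ω → Fin k → ℝ) : Matrix (Fin m) (Fin k) ℝ :=
  Matrix.of fun i j => (∫ ω, X ω i * Z ω j) - (∫ ω, X ω i) * (∫ ω, Z ω j)

/-- The componentwise mean of a random vector. -/
noncomputable def vmean {Ω : Type*} [MeasureSpace Ω] {m : ℕ}
    (X : Ω → Fin m → ℝ) : Fin m → ℝ :=
  fun i => ∫ ω, X ω i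


lemma aux_int_single {Ω : Type*} [MeasureSpace Ω] [IsProbabilityMeasure (volume : Measure Ω)]
    {d : ℕ} (X : Ω → Fin d → ℝ) (hXm : Measurable X)
    (hX2 : Integrable (fun ω => ∑ i, (X ω i) ^ 2)) (i : Fin d) :
    Integrable (fun ω => X ω i) := by
  have hm : Measurable fun ω => X ω i := (measurable_pi_apply i).comp hXm
  refine ((integrable_const (1:ℝ)).add hX2).mono' hm.aestronglyMeasurable ?_
  filter_upwards with ω
  have h1 : X ω i ^ 2 ≤ ∑ l, X ω l ^ 2 :=
    Finset.single_le_sum (f := fun l => _ ^ 2) (fun l _ => sq_nonneg _) (Finset.mem_univ i)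
  simp only [Pi.add_apply, Real.norm_eq_abs]
  nlinarith [sq_abs (X ω i), abs_nonneg (X ω i)]

lemma aux_int_mul {Ω : Type*} [MeasureSpace Ω] [IsProbabilityMeasure (volume : Measure Ω)]
    {d k : ℕ} (X : Ω → Fin d → ℝ) (Z : Ω → Fin k → ℝ)
    (hXm : Measurable X) (hZm : Measurable Z)
    (hX2 : Integrable (fun ω => ∑ i, (X ω i) ^ 2))
    (hZ2 : Integrable (fun ω => ∑ j, (Z ω j) ^ 2)) (i : Fin d) (j : Fin k) :
    Integrable (fun ω => X ω i * Z ω j) := by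
  have hm : Measurable fun ω => X ω i * Z ω j :=
    ((measurable_pi_apply i).comp hXm).mul ((measurable_pi_apply j).comp hZm)
  refine (hX2.add hZ2).mono' hm.aestronglyMeasurable ?_
  filter_upwards with ω
  have h1 : X ω i ^ 2 ≤ ∑ l, X ω l ^ 2 :=
    Finset.single_le_sum (f := fun l => _ ^ 2) (fun l _ => sq_nonneg _) (Finset.mem_univ i)
  have h2 : Z ω j ^ 2 ≤ ∑ l, Z ω l ^ 2 :=
    Finset.single_le_sum (f := fun l => _ ^ 2) (fun l _ => sq_nonneg _) (Finset.mem_univ j)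
  simp only [Pi.add_apply, Real.norm_eq_abs]
  rw [abs_mul]
  nlinarith [sq_abs (X ω i), sq_abs (Z ω j), sq_nonneg (|X ω i| - |Z ω j|),
    abs_nonneg (X ω i), abs_nonneg (Z ω j)]

lemma crossCov_affine {Ω : Type*} [MeasureSpace Ω] [IsProbabilityMeasure (volume : Measure Ω)]
    {d k : ℕ} (X : Ω → Fin d → ℝ) (Z : Ω → Fin k → ℝ)
    (hXm : Measurable X) (hZm : Measurable Z)
    (hX2 : Integrable (fun ω => ∑ i, (X ω i) ^ 2))
    (hZ2 : Integrable (fun ω => ∑ j, (Z ω j) ^ 2))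
    (A : Matrix (Fin d) (Fin d) ℝ) (b : Fin d → ℝ) :
    crossCov (fun ω => A.mulVec (X ω) + b) Z = A * crossCov X Z := by
  ext i j
  have hZj := aux_int_single Z hZm hZ2 j
  have hXl := fun l => aux_int_single X hXm hX2 l
  have hXZ := fun l => aux_int_mul X Z hXm hZm hX2 hZ2 l j
  have I1 : ∫ ω, ((∑ l, A i l * X ω l) + b i) * Z ω j
      = (∑ l, A i l * ∫ ω, X ω l * Z ω j) + b i * ∫ ω, Z ω j := by
    have e1 : (fun ω => ((∑ l, A i l * X ω l) + b i) * Z ω j)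
        = fun ω => (∑ l, A i l * (X ω l * Z ω j)) + b i * Z ω j := by
      funext ω; rw [add_mul, Finset.sum_mul]; simp [mul_assoc]
    rw [e1, integral_add (integrable_finset_sum _ (fun l _ => (hXZ l).const_mul _))
      (hZj.const_mul _), integral_finset_sum _ (fun l _ => (hXZ l).const_mul _)]
    simp [integral_const_mul]
  have I2 : ∫ ω, ((∑ l, A i l * X ω l) + b i)
      = (∑ l, A i l * ∫ ω, X ω l) + b i := by
    rw [integral_add (integrable_finset_sum _ (fun l _ => (hXl l).const_mul _))
      (integrable_const _), integral_finset_sum _ (fun l _ => (hXl l).const_mul _)]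
    simp [integral_const_mul]
  simp only [crossCov, Matrix.of_apply, Matrix.mul_apply, Pi.add_apply, Matrix.mulVec,
    dotProduct]
  rw [I1, I2]
  simp only [mul_sub]
  rw [Finset.sum_sub_distrib, add_mul, Finset.sum_mul]
  simp only [mul_assoc]
  ring

lemma sq_expand {d : ℕ} (a v : Fin d → ℝ) (c : ℝ) :
    ((∑ l, a l * v l) + c) ^ 2
      = (∑ l, ∑ l', a l * a l' * (v l * v l'))
        + ((∑ l, (2 * c * a l) * v l) + c ^ 2) := by
  have e1 : ((∑ l, a l * v l)) ^ 2 = ∑ l, ∑ l', a l * a l' * (v l * v l') := by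
    rw [sq, Finset.sum_mul_sum]
    exact Finset.sum_congr rfl fun l _ => Finset.sum_congr rfl fun l' _ => by ring
  have e2 : 2 * (∑ l, a l * v l) * c = ∑ l, (2 * c * a l) * v l := by
    rw [Finset.mul_sum, Finset.sum_mul]
    exact Finset.sum_congr rfl fun l _ => by ring
  rw [add_sq, e1, e2]; ring

lemma obj_eq {Ω : Type*} [MeasureSpace Ω] [IsProbabilityMeasure (volume : Measure Ω)]
    {d : ℕ} (X : Ω → Fin d → ℝ) (hXm : Measurable X)
    (hX2 : Integrable (fun ω => ∑ i, (X ω i) ^ 2))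
    (M : Matrix (Fin d) (Fin d) ℝ) (c : Fin d → ℝ) :
    (∫ ω, ∑ i, (M.mulVec (X ω) i + c i) ^ 2)
      = Matrix.trace (M * crossCov X X * Mᵀ)
        + ∑ i, (M.mulVec (vmean X) i + c i) ^ 2 := by
  have hXl := fun l => aux_int_single X hXm hX2 l
  have hXX := fun l l' => aux_int_mul X X hXm hXm hX2 hX2 l l'
  have key : ∀ i, (fun ω => (M.mulVec (X ω) i + c i) ^ 2)
      = fun ω => (∑ l, ∑ l', M i l * M i l' * (X ω l * X ω l'))
          + ((∑ l, (2 * c i * M i l) * X ω l) + c i ^ 2) := by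
    intro i; funext ω
    simpa [Matrix.mulVec, dotProduct] using sq_expand (M i) (X ω) (c i)
  have hint : ∀ i, Integrable (fun ω => (M.mulVec (X ω) i + c i) ^ 2) := by
    intro i; rw [key i]
    exact (integrable_finset_sum _ fun l _ => integrable_finset_sum _ fun l' _ =>
        (hXX l l').const_mul _).add
      ((integrable_finset_sum _ fun l _ => (hXl l).const_mul _).add (integrable_const _))
  have hInt_i : ∀ i, (∫ ω, (M.mulVec (X ω) i + c i) ^ 2)
      = (∑ l, ∑ l', M i l * M i l' * ∫ ω, X ω l * X ω l')
        + ((∑ l, (2 * c i * M i l) * ∫ ω, X ω l) + c i ^ 2) := by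
    intro i
    have hF : Integrable (fun ω => ∑ l, ∑ l', M i l * M i l' * (X ω l * X ω l')) :=
      integrable_finset_sum _ fun l _ => integrable_finset_sum _ fun l' _ =>
        (hXX l l').const_mul _
    have hG1 : Integrable (fun ω => ∑ l, (2 * c i * M i l) * X ω l) :=
      integrable_finset_sum _ fun l _ => (hXl l).const_mul _
    have hG : Integrable (fun ω => (∑ l, (2 * c i * M i l) * X ω l) + c i ^ 2) :=
      hG1.add (integrable_const _)
    rw [key i, integral_add hF hG, integral_add hG1 (integrable_const _),
      integral_finset_sum _ (fun l _ => integrable_finset_sum _ fun l' _ =>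
        (hXX l l').const_mul _),
      integral_finset_sum _ (fun l _ => (hXl l).const_mul _)]
    simp only [integral_const_mul, MeasureTheory.integral_const, measure_univ,
      ENNReal.toReal_one, probReal_univ, smul_eq_mul, one_mul]
    congr 1
    exact Finset.sum_congr rfl fun l _ => by
      rw [integral_finset_sum _ (fun l' _ => (hXX l l').const_mul _)]
      exact Finset.sum_congr rfl fun l' _ => integral_const_mul _ _
  have Emm : ∀ l l', (∫ ω, X ω l * X ω l')
      = crossCov X X l l' + (∫ ω, X ω l) * (∫ ω, X ω l') := by
    intro l l'; simp [crossCov]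
  have per : ∀ i, (∑ l, ∑ l', M i l * M i l' * ∫ ω, X ω l * X ω l')
        + ((∑ l, (2 * c i * M i l) * ∫ ω, X ω l) + c i ^ 2)
      = (M * crossCov X X * Mᵀ) i i + (M.mulVec (vmean X) i + c i) ^ 2 := by
    intro i
    have tr : (M * crossCov X X * Mᵀ) i i
        = ∑ l, ∑ l', M i l * M i l' * crossCov X X l l' := by
      simp only [Matrix.mul_apply, Matrix.transpose_apply, Finset.sum_mul]
      rw [Finset.sum_comm]
      exact Finset.sum_congr rfl fun l _ => Finset.sum_congr rfl fun l' _ => by ring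
    have k2 : (M.mulVec (vmean X) i + c i) ^ 2
        = (∑ l, ∑ l', M i l * M i l' * ((∫ ω, X ω l) * ∫ ω, X ω l'))
          + ((∑ l, (2 * c i * M i l) * ∫ ω, X ω l) + c i ^ 2) := by
      simpa [Matrix.mulVec, dotProduct, vmean] using
        sq_expand (M i) (vmean X) (c i)
    simp only [Emm, mul_add, Finset.sum_add_distrib]
    rw [tr, k2]
    ring
  rw [integral_finset_sum _ (fun i _ => hint i)]
  have : ∑ i, ∫ ω, (M.mulVec (X ω) i + c i) ^ 2
      = ∑ i, ((M * crossCov X X * Mᵀ) i i + (M.mulVec (vmean X) i + c i) ^ 2) :=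
    Finset.sum_congr rfl fun i _ => by rw [hInt_i i, per i]
  rw [this, Finset.sum_add_distrib]
  rfl

lemma trace_mul_transpose_nonneg {d : ℕ} (S : Matrix (Fin d) (Fin d) ℝ) :
    0 ≤ (S * Sᵀ).trace := by
  rw [Matrix.trace]
  refine Finset.sum_nonneg fun i _ => ?_
  simp only [Matrix.diag_apply, Matrix.mul_apply, Matrix.transpose_apply]
  exact Finset.sum_nonneg fun j _ => mul_self_nonneg _

lemma proj_trace_le {d : ℕ} (Q P : Matrix (Fin d) (Fin d) ℝ)
    (hPt : Pᵀ = P) (hPP : P * P = P) :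
    ((Q * P) * (Q * P)ᵀ).trace ≤ (Q * Qᵀ).trace := by
  have h1 : Q * Qᵀ = (Q * P) * (Q * P)ᵀ + (Q - Q * P) * (Q - Q * P)ᵀ := by
    simp only [Matrix.transpose_sub, Matrix.transpose_mul, hPt]
    have e1 : Q * P * (P * Qᵀ) = Q * (P * P) * Qᵀ := by noncomm_ring
    have e2 : (Q - Q * P) * (Qᵀ - P * Qᵀ)
        = Q * Qᵀ - Q * P * Qᵀ - Q * P * Qᵀ + Q * (P * P) * Qᵀ := by
      noncomm_ring
    rw [e1, e2, hPP]
    noncomm_ring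
  have h2 : ((Q - Q * P) * (Q - Q * P)ᵀ).trace ≥ 0 := trace_mul_transpose_nonneg _
  rw [h1, Matrix.trace_add]
  linarith

/-- LEACE: With `Σ_XX = Cov(X,X)`, `Σ_XZ = Cov(X,Z)`,
`Im(Σ_XZ) ⊆ Im(Σ_XX)`, `R` the symmetric PSD square root of `Σ_XX`, `W = R⁺`,
`N = (W·Σ_XZ)⁺`, the matrix `Â = I − R·(W·Σ_XZ)·N·W` and bias `b̂ = E[X] − Â·E[X]`
satisfy `Cov(Â·X + b̂, Z) = 0` and minimize `E[‖A·X + b − X‖²]` among all affine maps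
with `Cov(A·X + b, Z) = 0`. -/
theorem LEACE_optimality
    {Ω : Type*} [MeasureSpace Ω] [IsProbabilityMeasure (volume : Measure Ω)]
    {d k : ℕ} (X : Ω → Fin d → ℝ) (Z : Ω → Fin k → ℝ)
    (hXm : Measurable X) (hZm : Measurable Z)
    (hX2 : Integrable (fun ω => ∑ i, (X ω i) ^ 2))
    (hZ2 : Integrable (fun ω => ∑ j, (Z ω j) ^ 2))
    (hIm : ∀ j, ∃ x : Fin d → ℝ,
      (crossCov X X).mulVec x = fun i => crossCov X Z i j)
    (R W : Matrix (Fin d) (Fin d) ℝ) (N : Matrix (Fin k) (Fin d) ℝ)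
    (hR : R.PosSemidef) (hRS : R * R = crossCov X X)
    (hW1 : R * W * R = R) (hW2 : W * R * W = W)
    (hW3 : (R * W)ᵀ = R * W) (hW4 : (W * R)ᵀ = W * R)
    (hN1 : (W * crossCov X Z) * N * (W * crossCov X Z) = W * crossCov X Z)
    (hN2 : N * (W * crossCov X Z) * N = N)
    (hN3 : ((W * crossCov X Z) * N)ᵀ = (W * crossCov X Z) * N)
    (hN4 : (N * (W * crossCov X Z))ᵀ = N * (W * crossCov X Z))
    (Ahat : Matrix (Fin d) (Fin d) ℝ) (bhat : Fin d → ℝ)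
    (hAhat : Ahat = 1 - R * (W * crossCov X Z) * N * W)
    (hbhat : bhat = vmean X - Ahat.mulVec (vmean X)) :
    crossCov (fun ω => Ahat.mulVec (X ω) + bhat) Z = 0
    ∧
    ∀ (A : Matrix (Fin d) (Fin d) ℝ) (b : Fin d → ℝ),
      crossCov (fun ω => A.mulVec (X ω) + b) Z = 0 →
      (∫ ω, ∑ i, (Ahat.mulVec (X ω) i + bhat i - X ω i) ^ 2)
        ≤ ∫ ω, ∑ i, (A.mulVec (X ω) i + b i - X ω i) ^ 2 := by
  have hRT : Rᵀ = R := by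
    ext i j
    simpa using congrFun (congrFun hR.1 i) j
  obtain ⟨C, hc⟩ : ∃ C : Matrix (Fin d) (Fin k) ℝ, crossCov X Z = R * R * C := by
    refine ⟨Matrix.of (fun l j => (hIm j).choose l), ?_⟩
    ext i j
    have hs := congrFun (hIm j).choose_spec i
    rw [hRS, ← hs]
    simp [Matrix.mul_apply, Matrix.mulVec, dotProduct]
  have hRWS : R * W * crossCov X Z = crossCov X Z := by
    rw [hc]
    have e : R * W * (R * R * C) = (R * W * R) * (R * C) := by
      simp only [Matrix.mul_assoc]
    rw [e, hW1, Matrix.mul_assoc]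
  have hPP : (W * crossCov X Z * N) * (W * crossCov X Z * N) = W * crossCov X Z * N := by
    have e : (W * crossCov X Z * N) * (W * crossCov X Z * N)
        = (W * crossCov X Z) * (N * (W * crossCov X Z) * N) := by
      simp only [Matrix.mul_assoc]
    rw [e, hN2]
  have hWRP : W * R * (W * crossCov X Z * N) = W * crossCov X Z * N := by
    have e : W * R * (W * crossCov X Z * N) = (W * R * W) * (crossCov X Z * N) := by
      simp only [Matrix.mul_assoc]
    rw [e, hW2, Matrix.mul_assoc]
  have hPWR : (W * crossCov X Z * N) * (W * R) = W * crossCov X Z * N := by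
    have h := congrArg Matrix.transpose hWRP
    rwa [Matrix.transpose_mul, hN3, hW4] at h
  have hAhatS : Ahat * crossCov X Z = 0 := by
    rw [hAhat, Matrix.sub_mul, Matrix.one_mul]
    have e : R * (W * crossCov X Z) * N * W * crossCov X Z
        = R * (W * crossCov X Z * N * (W * crossCov X Z)) := by
      simp only [Matrix.mul_assoc]
    rw [e, hN1]
    have e2 : R * (W * crossCov X Z) = R * W * crossCov X Z := by
      rw [Matrix.mul_assoc]
    rw [e2, hRWS, sub_self]
  constructor
  · rw [crossCov_affine X Z hXm hZm hX2 hZ2 Ahat bhat, hAhatS]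
  intro A b hAb
  have hAS : A * crossCov X Z = 0 :=
    (crossCov_affine X Z hXm hZm hX2 hZ2 A b).symm.trans hAb
  have eob : ∀ (A : Matrix (Fin d) (Fin d) ℝ) (b : Fin d → ℝ),
      (fun ω => ∑ i, (A.mulVec (X ω) i + b i - X ω i) ^ 2)
        = fun ω => ∑ i, ((A - 1).mulVec (X ω) i + b i) ^ 2 := by
    intro A b; funext ω
    refine Finset.sum_congr rfl fun i _ => ?_
    rw [Matrix.sub_mulVec, Matrix.one_mulVec]
    simp only [Pi.sub_apply]
    ring
  rw [show (∫ ω, ∑ i, (Ahat.mulVec (X ω) i + bhat i - X ω i) ^ 2)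
        = ∫ ω, ∑ i, ((Ahat - 1).mulVec (X ω) i + bhat i) ^ 2 by rw [eob Ahat bhat],
     show (∫ ω, ∑ i, (A.mulVec (X ω) i + b i - X ω i) ^ 2)
        = ∫ ω, ∑ i, ((A - 1).mulVec (X ω) i + b i) ^ 2 by rw [eob A b],
     obj_eq X hXm hX2 (Ahat - 1) bhat, obj_eq X hXm hX2 (A - 1) b]
  have hbz : ∑ i, ((Ahat - 1).mulVec (vmean X) i + bhat i) ^ 2 = 0 := by
    refine Finset.sum_eq_zero fun i _ => ?_
    rw [hbhat, Matrix.sub_mulVec, Matrix.one_mulVec]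
    simp only [Pi.sub_apply]
    ring
  have hbnn : 0 ≤ ∑ i, ((A - 1).mulVec (vmean X) i + b i) ^ 2 :=
    Finset.sum_nonneg fun i _ => sq_nonneg _
  have hMhatR : (Ahat - 1) * R = -(R * (W * crossCov X Z * N)) := by
    rw [hAhat]
    have e0 : (1 - R * (W * crossCov X Z) * N * W - 1 : Matrix (Fin d) (Fin d) ℝ)
        = -(R * (W * crossCov X Z) * N * W) := by abel
    rw [e0, Matrix.neg_mul]
    have e1 : R * (W * crossCov X Z) * N * W * R
        = R * ((W * crossCov X Z * N) * (W * R)) := by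
      simp only [Matrix.mul_assoc]
    rw [e1, hPWR]
  have key1 : ((Ahat - 1) * crossCov X X * (Ahat - 1)ᵀ).trace
      = ((R * (W * crossCov X Z * N)) * (R * (W * crossCov X Z * N))ᵀ).trace := by
    rw [← hRS]
    have e : (Ahat - 1) * (R * R) * (Ahat - 1)ᵀ
        = ((Ahat - 1) * R) * ((Ahat - 1) * R)ᵀ := by
      rw [Matrix.transpose_mul, hRT]
      simp only [Matrix.mul_assoc]
    rw [e, hMhatR]
    simp [Matrix.transpose_neg, Matrix.neg_mul, Matrix.mul_neg, neg_neg]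
  have key2 : ((A - 1) * crossCov X X * (A - 1)ᵀ).trace
      = (((A - 1) * R) * ((A - 1) * R)ᵀ).trace := by
    rw [← hRS]
    have e : (A - 1) * (R * R) * (A - 1)ᵀ
        = ((A - 1) * R) * ((A - 1) * R)ᵀ := by
      rw [Matrix.transpose_mul, hRT]
      simp only [Matrix.mul_assoc]
    rw [e]
  have hARP : A * (R * (W * crossCov X Z * N)) = 0 := by
    have e : A * (R * (W * crossCov X Z * N)) = (A * (R * W * crossCov X Z)) * N := by
      simp only [Matrix.mul_assoc]
    rw [e, hRWS, hAS, Matrix.zero_mul]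
  have hMRP : ((A - 1) * R) * (W * crossCov X Z * N)
      = -(R * (W * crossCov X Z * N)) := by
    have e : ((A - 1) * R) * (W * crossCov X Z * N)
        = A * (R * (W * crossCov X Z * N)) - R * (W * crossCov X Z * N) := by
      simp only [Matrix.sub_mul, Matrix.one_mul, Matrix.mul_assoc]
    rw [e, hARP, zero_sub]
  have hfin : ((R * (W * crossCov X Z * N)) * (R * (W * crossCov X Z * N))ᵀ).trace
      ≤ (((A - 1) * R) * ((A - 1) * R)ᵀ).trace := by
    have h := proj_trace_le ((A - 1) * R) (W * crossCov X Z * N) hN3 hPP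
    rw [hMRP] at h
    simpa [Matrix.transpose_neg, Matrix.neg_mul, Matrix.mul_neg, neg_neg] using h
  rw [key1, key2, hbz]
  linarith
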